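/- arXiv:1906.08543 — 5 statements merged into one kernel-verified Lean document; each statement's English description precedes it below -/
import Mathlib

section
/- Let R be a principal ideal ring, let n ∈ R be nonzero, and let I ⊆ R[x₁,…,xₛ] be an ideal. Suppose G_n ⊆ R[x₁,…,xₛ] is a finite set of polynomials such that: (i) the image π_n(G_n) is a strong Gröbner basis of the image ideal π_n(I) ⊆ (R/nR)[x₁,…,xₛ]; and (ii) for every g ∈ G_n the leading coefficient lc(g) divides n and lc(g) ∉ nR (in particular g ≠ 0). Then G_n ∪ {n} is a strong Gröbner basis of the ideal I + n·R[x₁,…,xₛ]. -/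
open MvPolynomial

/-- The leading monomial (largest exponent vector of the support) of a multivariate
polynomial with respect to a monomial order. -/
noncomputable def MonomialOrder.lm {σ R : Type*} [CommSemiring R] (m : MonomialOrder σ)
    (f : MvPolynomial σ R) : σ →₀ ℕ :=
  m.toSyn.symm (f.support.sup fun d => m.toSyn d)

/-- The leading coefficient of a multivariate polynomial with respect to a monomial order. -/
noncomputable def MonomialOrder.lc {σ R : Type*} [CommSemiring R] (m : MonomialOrder σ)
    (f : MvPolynomial σ R) : R :=
  f.coeff (m.lm f)

/-- `G` is a strong Gröbner basis of an ideal `I` w.r.t. the monomial order `m` if `G ⊆ I`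
and for every nonzero `f ∈ I` there is a nonzero `g ∈ G` whose leading term divides the
leading term of `f`, i.e. `lm g ≤ lm f` componentwise and `lc g ∣ lc f`. -/
def MonomialOrder.IsStrongGroebnerBasis {σ R : Type*} [CommSemiring R] (m : MonomialOrder σ)
    (G : Set (MvPolynomial σ R)) (I : Ideal (MvPolynomial σ R)) : Prop :=
  (∀ g ∈ G, g ∈ I) ∧
    ∀ f ∈ I, f ≠ 0 → ∃ g ∈ G, g ≠ 0 ∧ m.lm g ≤ m.lm f ∧ m.lc g ∣ m.lc f

/-!
Write `π` for reduction of coefficients modulo `n`. Since `ker π = (n)`, the ideal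
`I + (n)` is the full preimage `π⁻¹(π(I))`. Let `f ∈ I + (n)` be nonzero. If `n ∣ lc f`,
the constant `n` is a divisor of its leading term. Otherwise `π` preserves the leading term
of `f`, and likewise of every `g ∈ G` (as `lc g ∉ (n)`), so a `g` with `lt(π g) ∣ lt(π f)`
has `lm g ≤ lm f` and `lc g ∣ lc f` modulo `n`; as `lc g ∣ n`, this lifts to `lc g ∣ lc f`.
-/

namespace MonomialOrder

variable {σ R S : Type*} [CommSemiring R] [CommSemiring S] (m : MonomialOrder σ)

theorem lm_eq_degree (f : MvPolynomial σ R) : m.lm f = m.degree f := rfl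

theorem lc_eq_leadingCoeff (f : MvPolynomial σ R) : m.lc f = m.leadingCoeff f := rfl

variable {m} (φ : R →+* S) {f : MvPolynomial σ R}

theorem degree_map_of_map_leadingCoeff_ne_zero (h : φ (m.leadingCoeff f) ≠ 0) :
    m.degree (map φ f) = m.degree f :=
  m.toSyn.injective <| le_antisymm
    (m.degree_le_iff.2 fun _ hd => m.le_degree (support_map_subset φ f hd))
    (m.le_degree (by rwa [mem_support_iff, coeff_map]))

theorem leadingCoeff_map_of_map_leadingCoeff_ne_zero (h : φ (m.leadingCoeff f) ≠ 0) :
    m.leadingCoeff (map φ f) = φ (m.leadingCoeff f) := by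
  rw [leadingCoeff, degree_map_of_map_leadingCoeff_ne_zero φ h, coeff_map, leadingCoeff]

theorem map_ne_zero_of_map_leadingCoeff_ne_zero (h : φ (m.leadingCoeff f) ≠ 0) :
    map φ f ≠ 0 := by
  rwa [← m.leadingCoeff_ne_zero_iff, leadingCoeff_map_of_map_leadingCoeff_ne_zero φ h]

end MonomialOrder

theorem Ideal.Quotient.mk_span_singleton_dvd_mk_iff {R : Type*} [CommRing R] {a b n : R}
    (ha : a ∣ n) : mk (span {n}) a ∣ mk (span {n}) b ↔ a ∣ b := by
  refine ⟨fun ⟨c, hc⟩ => ?_, map_dvd _⟩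
  obtain ⟨c, rfl⟩ := mk_surjective c
  rw [← map_mul, Ideal.Quotient.eq, mem_span_singleton] at hc
  simpa using dvd_add (ha.trans hc) (dvd_mul_right a c)

theorem MvPolynomial.comap_map_map_mk_span_singleton {σ R : Type*} [CommRing R] (n : R)
    (I : Ideal (MvPolynomial σ R)) :
    (I.map (map (Ideal.Quotient.mk (Ideal.span {n})))).comap
      (map (Ideal.Quotient.mk (Ideal.span {n}))) = I + Ideal.span {C n} := by
  rw [Ideal.comap_map_of_surjective (map (Ideal.Quotient.mk (Ideal.span {n})))
      (map_surjective _ Ideal.Quotient.mk_surjective),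
    ← RingHom.ker_eq_comap_bot, ker_map, Ideal.mk_ker, Ideal.map_span, Set.image_singleton]
  rfl

theorem strongGroebnerBasis_of_quotient_general {σ R : Type*} [CommRing R]
    (m : MonomialOrder σ) (n : R) (hn : n ≠ 0)
    (I : Ideal (MvPolynomial σ R)) (G : Finset (MvPolynomial σ R))
    (hGB : m.IsStrongGroebnerBasis
      ((fun f => MvPolynomial.map (Ideal.Quotient.mk (Ideal.span {n})) f) '' (G : Set _))
      (I.map (MvPolynomial.map (Ideal.Quotient.mk (Ideal.span {n})))))
    (hlc : ∀ g ∈ G, m.lc g ∣ n ∧ m.lc g ∉ Ideal.span ({n} : Set R)) :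
    m.IsStrongGroebnerBasis ((G : Set (MvPolynomial σ R)) ∪ {C n})
      (I + Ideal.span {(C n : MvPolynomial σ R)}) := by
  rw [← comap_map_map_mk_span_singleton]
  unfold MonomialOrder.IsStrongGroebnerBasis at hGB ⊢
  simp only [MonomialOrder.lm_eq_degree, MonomialOrder.lc_eq_leadingCoeff] at hGB hlc ⊢
  set π := map (σ := σ) (Ideal.Quotient.mk (Ideal.span {n}))
  refine ⟨fun g hg => ?_, fun f hf hf0 => ?_⟩
  · rcases hg with hg | rfl
    · exact hGB.1 _ ⟨g, hg, rfl⟩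
    · simp [π]
  by_cases hlcf : m.leadingCoeff f ∈ Ideal.span {n}
  · exact ⟨C n, Or.inr rfl, C_ne_zero.2 hn, by simp,
      by simpa [Ideal.mem_span_singleton] using hlcf⟩
  have hπf : Ideal.Quotient.mk _ (m.leadingCoeff f) ≠ 0 :=
    Ideal.Quotient.eq_zero_iff_mem.not.2 hlcf
  obtain ⟨_, ⟨g, hgG, rfl⟩, -, hdeg, hdvd⟩ :=
    hGB.2 (π f) hf (m.map_ne_zero_of_map_leadingCoeff_ne_zero _ hπf)
  obtain ⟨hgn, hg⟩ := hlc g hgG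
  have hπg : Ideal.Quotient.mk _ (m.leadingCoeff g) ≠ 0 :=
    Ideal.Quotient.eq_zero_iff_mem.not.2 hg
  rw [m.degree_map_of_map_leadingCoeff_ne_zero _ hπf,
    m.degree_map_of_map_leadingCoeff_ne_zero _ hπg] at hdeg
  rw [m.leadingCoeff_map_of_map_leadingCoeff_ne_zero _ hπf,
    m.leadingCoeff_map_of_map_leadingCoeff_ne_zero _ hπg,
    Ideal.Quotient.mk_span_singleton_dvd_mk_iff hgn] at hdvd
  refine ⟨g, Or.inl hgG, ?_, hdeg, hdvd⟩
  rintro rfl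
  exact hg (by simp)

/-- Pulling back a strong Gröbner basis along the projection `R[x] → (R/nR)[x]`:
if `π_n(G)` is a strong Gröbner basis of `π_n(I)` and every `g ∈ G` has leading coefficient
dividing `n` but not lying in `nR`, then `G ∪ {n}` is a strong Gröbner basis of
`I + n·R[x]`. -/
theorem strongGroebnerBasis_of_quotient {σ R : Type*} [CommRing R] [IsPrincipalIdealRing R]
    [Finite σ] (m : MonomialOrder σ) (n : R) (hn : n ≠ 0)
    (I : Ideal (MvPolynomial σ R)) (G : Finset (MvPolynomial σ R))
    (hGB : m.IsStrongGroebnerBasis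
      ((fun f => MvPolynomial.map (Ideal.Quotient.mk (Ideal.span {n})) f) '' (G : Set _))
      (I.map (MvPolynomial.map (Ideal.Quotient.mk (Ideal.span {n})))))
    (hlc : ∀ g ∈ G, m.lc g ∣ n ∧ m.lc g ∉ Ideal.span ({n} : Set R)) :
    m.IsStrongGroebnerBasis ((G : Set (MvPolynomial σ R)) ∪ {C n})
      (I + Ideal.span {(C n : MvPolynomial σ R)}) :=
  strongGroebnerBasis_of_quotient_general m n hn I G hGB hlc
end

section
/- Let R be a principal ideal ring and let a, b, u, v ∈ R satisfy a·b = 0 and u·a + v·b = 1. Let I ⊆ R[x₁,…,xₛ] be an ideal, and let G_a = (g_{a,k})_{k∈K} and G_b = (g_{b,l})_{l∈L} be finite families of nonzero polynomials that are strong Gröbner bases of I + a·R[x₁,…,xₛ] and of I + b·R[x₁,…,xₛ], respectively, such that: (i) for every k ∈ K, if g_{a,k} is non-constant then lc(g_{a,k}) divides a and lc(g_{a,k}) ∉ aR; (ii) for every l ∈ L, if g_{b,l} is non-constant then lc(g_{b,l}) divides b and lc(g_{b,l}) ∉ bR. For k ∈ K and l ∈ L put δ_{k,l} = lm(g_{a,k})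 ⊔ lm(g_{b,l}) (componentwise maximum of exponent vectors) and define f_{k,l} = u·a·lc(g_{a,k})·X^{δ_{k,l} − lm(g_{b,l})}·g_{b,l} + v·b·lc(g_{b,l})·X^{δ_{k,l} − lm(g_{a,k})}·g_{a,k}. Then the set G = { f_{k,l} : k ∈ K, l ∈ L } is a strong Gröbner basis of I. -/
open MvPolynomial

/-!
Put `e = u a`, so that `1 - e = v b` and `e (1 - e) = 0`. For a nonzero `h ∈ I` with leading
term `c X^μ`, the polynomials `v b h + u a X^μ ∈ I + (a)` and `u a h + v b X^μ ∈ I + (b)` have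
leading monomial `μ` and leading coefficients whose product is `c`. The two strong Gröbner bases
thus provide `g_{a,k}` and `g_{b,l}` with leading monomials below `μ` and with
`lc(g_{a,k}) lc(g_{b,l}) ∣ c`. The combination `f_{k,l}` lies in `I`, because `u a` kills
`I + (b)` modulo `I` and `v b` kills `I + (a)`, and its leading term is
`lc(g_{a,k}) lc(g_{b,l}) X^δ`, which divides `c X^μ`.
-/

theorem Ideal.mul_mem_of_mem_sup_span_singleton {A : Type*} [CommSemiring A] {I : Ideal A}
    {x g q : A} (hg : g ∈ I ⊔ Ideal.span {x}) (hq : q * x = 0) : q * g ∈ I := by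
  obtain ⟨y, hy, _, hz, rfl⟩ := Submodule.mem_sup.mp hg
  obtain ⟨r, rfl⟩ := Ideal.mem_span_singleton'.mp hz
  rw [mul_add, mul_left_comm, hq, mul_zero, add_zero]
  exact I.mul_mem_left q hy

/-- In `R ≅ R e × R (1 - e)` with `e = u a`, the two factors are `(1, c)` and `(c, 1)`. -/
theorem mul_eq_of_mul_eq_zero_of_add_eq_one {R : Type*} [CommRing R] {a b u v : R}
    (hab : a * b = 0) (huv : u * a + v * b = 1) (c : R) :
    (v * b * c + u * a) * (u * a * c + v * b) = c := by
  linear_combination (u * v * (c - 1) ^ 2) * hab + (c * (u * a + v * b) + c) * huv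

namespace MonomialOrder

variable {σ R : Type*} [CommSemiring R] {m : MonomialOrder σ}

theorem degree_eq_of_degree_le_of_coeff_ne_zero {f : MvPolynomial σ R} {d : σ →₀ ℕ}
    (hle : m.degree f ≼[m] d) (hd : f.coeff d ≠ 0) : m.degree f = d :=
  m.toSyn.injective (le_antisymm hle (m.le_degree (mem_support_iff.mpr hd)))

theorem degree_monomial_mul_le (e : σ →₀ ℕ) (c : R) (f : MvPolynomial σ R) :
    m.degree (monomial e c * f) ≼[m] e + m.degree f :=
  calc m.toSyn (m.degree (monomial e c * f))
      ≤ m.toSyn (m.degree (monomial e c)) + m.toSyn (m.degree f) := by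
        rw [← map_add]; exact degree_mul_le
    _ ≤ m.toSyn e + m.toSyn (m.degree f) := by grw [degree_monomial_le]
    _ = m.toSyn (e + m.degree f) := (map_add _ _ _).symm

theorem degree_C_mul_add_monomial_degree {h : MvPolynomial σ R} {x y : R}
    (hne : y * m.leadingCoeff h + x ≠ 0) :
    m.degree (C y * h + monomial (m.degree h) x) = m.degree h ∧
      m.leadingCoeff (C y * h + monomial (m.degree h) x) = y * m.leadingCoeff h + x := by
  have hcoeff : (C y * h + monomial (m.degree h) x).coeff (m.degree h) =
      y * m.leadingCoeff h + x := by
    classical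
    simp [coeff_C_mul, coeff_monomial, leadingCoeff]
  have hle : m.degree (C y * h + monomial (m.degree h) x) ≼[m] m.degree h := by
    rw [← smul_eq_C_mul]
    exact degree_add_le.trans (max_le degree_smul_le (degree_monomial_le x))
  have hdeg := degree_eq_of_degree_le_of_coeff_ne_zero hle (hcoeff ▸ hne)
  exact ⟨hdeg, by rw [leadingCoeff, hdeg, hcoeff]⟩

noncomputable def lcmCombination (m : MonomialOrder σ) (f g : MvPolynomial σ R) (p q : R) :
    MvPolynomial σ R :=
  monomial (m.degree f ⊔ m.degree g - m.degree g) p * g +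
    monomial (m.degree f ⊔ m.degree g - m.degree f) q * f

theorem degree_lcmCombination {f g : MvPolynomial σ R} {p q : R}
    (hne : p * m.leadingCoeff g + q * m.leadingCoeff f ≠ 0) :
    m.degree (m.lcmCombination f g p q) = m.degree f ⊔ m.degree g ∧
      m.leadingCoeff (m.lcmCombination f g p q) =
        p * m.leadingCoeff g + q * m.leadingCoeff f := by
  set δ := m.degree f ⊔ m.degree g
  have hg : δ - m.degree g + m.degree g = δ := tsub_add_cancel_of_le le_sup_right
  have hf : δ - m.degree f + m.degree f = δ := tsub_add_cancel_of_le le_sup_left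
  have hcoeff : (m.lcmCombination f g p q).coeff δ =
      p * m.leadingCoeff g + q * m.leadingCoeff f := by
    have hpg := coeff_monomial_mul (m.degree g) (δ - m.degree g) p g
    have hqf := coeff_monomial_mul (m.degree f) (δ - m.degree f) q f
    rw [hg] at hpg
    rw [hf] at hqf
    rw [lcmCombination, coeff_add, hpg, hqf, leadingCoeff, leadingCoeff]
  have hle : m.degree (m.lcmCombination f g p q) ≼[m] δ := by
    grw [lcmCombination, degree_add_le, degree_monomial_mul_le, degree_monomial_mul_le, hf, hg,
      max_self]
  have hdeg := degree_eq_of_degree_le_of_coeff_ne_zero hle (hcoeff ▸ hne)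
  exact ⟨hdeg, by rw [leadingCoeff, hdeg, hcoeff]⟩

theorem degree_lcmCombination_of_add_eq_one {f g : MvPolynomial σ R} {p q : R}
    (hpq : p + q = 1) (hne : m.leadingCoeff f * m.leadingCoeff g ≠ 0) :
    m.degree (m.lcmCombination f g (p * m.leadingCoeff f) (q * m.leadingCoeff g)) =
        m.degree f ⊔ m.degree g ∧
      m.leadingCoeff (m.lcmCombination f g (p * m.leadingCoeff f) (q * m.leadingCoeff g)) =
        m.leadingCoeff f * m.leadingCoeff g := by
  have hcoeff :
      p * m.leadingCoeff f * m.leadingCoeff g + q * m.leadingCoeff g * m.leadingCoeff f =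
        m.leadingCoeff f * m.leadingCoeff g := by
    rw [mul_right_comm q, ← add_mul, ← add_mul, hpq, one_mul]
  rw [← hcoeff] at hne ⊢
  exact degree_lcmCombination hne

theorem lcmCombination_mem {I : Ideal (MvPolynomial σ R)} {f g : MvPolynomial σ R} {a b p q : R}
    (hf : f ∈ I ⊔ Ideal.span {C a}) (hg : g ∈ I ⊔ Ideal.span {C b}) (hpb : p * b = 0)
    (hqa : q * a = 0) : m.lcmCombination f g p q ∈ I := by
  have monomial_mul_C_eq_zero {e : σ →₀ ℕ} {r w : R} (h : r * w = 0) :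
      monomial e r * C w = 0 := by
    rw [mul_comm, C_mul_monomial, mul_comm, h, monomial_zero]
  exact I.add_mem (Ideal.mul_mem_of_mem_sup_span_singleton hg (monomial_mul_C_eq_zero hpb))
    (Ideal.mul_mem_of_mem_sup_span_singleton hf (monomial_mul_C_eq_zero hqa))

theorem IsStrongGroebnerBasis.exists_degree_le_leadingCoeff_dvd {G : Set (MvPolynomial σ R)}
    {I : Ideal (MvPolynomial σ R)} (hG : m.IsStrongGroebnerBasis G I) {h : MvPolynomial σ R}
    {x y : R} (hh : h ∈ I) (hx : monomial (m.degree h) x ∈ I)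
    (hne : y * m.leadingCoeff h + x ≠ 0) :
    ∃ g ∈ G, m.degree g ≤ m.degree h ∧ m.leadingCoeff g ∣ y * m.leadingCoeff h + x := by
  obtain ⟨hdeg, hlc⟩ := degree_C_mul_add_monomial_degree hne
  have hw : C y * h + monomial (m.degree h) x ≠ 0 :=
    leadingCoeff_ne_zero_iff.mp (hlc ▸ hne)
  obtain ⟨g, hgG, -, hlm, hdvd⟩ := hG.2 _ (I.add_mem (I.mul_mem_left _ hh) hx) hw
  exact ⟨g, hgG, hdeg ▸ hlm, hlc ▸ hdvd⟩

end MonomialOrder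

theorem strongGroebnerBasis_recombination_general {σ R : Type*} [CommRing R]
    (m : MonomialOrder σ) (a b u v : R)
    (hab : a * b = 0) (huv : u * a + v * b = 1)
    (I : Ideal (MvPolynomial σ R))
    {K L : Type*}
    (ga : K → MvPolynomial σ R) (gb : L → MvPolynomial σ R)
    (hGa : m.IsStrongGroebnerBasis (Set.range ga)
      (I + Ideal.span {(C a : MvPolynomial σ R)}))
    (hGb : m.IsStrongGroebnerBasis (Set.range gb)
      (I + Ideal.span {(C b : MvPolynomial σ R)})) :
    m.IsStrongGroebnerBasis
      { f | ∃ k : K, ∃ l : L, f =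
        monomial (m.lm (ga k) ⊔ m.lm (gb l) - m.lm (gb l)) (u * a * m.lc (ga k)) * gb l
        + monomial (m.lm (ga k) ⊔ m.lm (gb l) - m.lm (ga k)) (v * b * m.lc (gb l)) * ga k }
      I := by
  refine ⟨?_, fun h hhI hh0 => ?_⟩
  · rintro _ ⟨k, l, rfl⟩
    exact MonomialOrder.lcmCombination_mem (hGa.1 _ ⟨k, rfl⟩) (hGb.1 _ ⟨l, rfl⟩)
      (by linear_combination u * m.lc (ga k) * hab) (by linear_combination v * m.lc (gb l) * hab)
  have hlc0 : m.leadingCoeff h ≠ 0 := MonomialOrder.leadingCoeff_ne_zero_iff.mpr hh0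
  have hc := mul_eq_of_mul_eq_zero_of_add_eq_one hab huv (m.leadingCoeff h)
  have hc0 : (v * b * m.leadingCoeff h + u * a) * (u * a * m.leadingCoeff h + v * b) ≠ 0 := by
    rwa [hc]
  have monomial_mem {w : R} (r : R) : monomial (m.degree h) (r * w) ∈ Ideal.span {C w} :=
    Ideal.mem_span_singleton'.mpr ⟨monomial _ r, by rw [mul_comm, C_mul_monomial, mul_comm]⟩
  obtain ⟨_, ⟨k, rfl⟩, hk_deg, hk_lc⟩ := hGa.exists_degree_le_leadingCoeff_dvd
    (Ideal.mem_sup_left hhI) (Ideal.mem_sup_right (monomial_mem u)) (left_ne_zero_of_mul hc0)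
  obtain ⟨_, ⟨l, rfl⟩, hl_deg, hl_lc⟩ := hGb.exists_degree_le_leadingCoeff_dvd
    (Ideal.mem_sup_left hhI) (Ideal.mem_sup_right (monomial_mem v)) (right_ne_zero_of_mul hc0)
  have hdvd : m.leadingCoeff (ga k) * m.leadingCoeff (gb l) ∣ m.leadingCoeff h :=
    hc ▸ mul_dvd_mul hk_lc hl_lc
  have hne := ne_zero_of_dvd_ne_zero hlc0 hdvd
  obtain ⟨hdeg, hlc⟩ := MonomialOrder.degree_lcmCombination_of_add_eq_one huv hne
  exact ⟨_, ⟨k, l, rfl⟩, MonomialOrder.leadingCoeff_ne_zero_iff.mp (hlc ▸ hne),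
    hdeg.trans_le (sup_le hk_deg hl_deg), hlc.dvd.trans hdvd⟩

/-- Recombination of strong Gröbner bases: if `a·b = 0`, `u·a + v·b = 1`, and
`G_a`, `G_b` are strong Gröbner bases of `I + a·R[x]` and `I + b·R[x]` (with the stated
normalization of leading coefficients of non-constant members), then the set of
polynomials `f_{k,l} = u·a·lc(g_{a,k})·X^{δ−lm(g_{b,l})}·g_{b,l}
+ v·b·lc(g_{b,l})·X^{δ−lm(g_{a,k})}·g_{a,k}`, `δ = lm(g_{a,k}) ⊔ lm(g_{b,l})`,
is a strong Gröbner basis of `I`. -/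
theorem strongGroebnerBasis_recombination {σ R : Type*} [CommRing R] [IsPrincipalIdealRing R]
    [Finite σ] (m : MonomialOrder σ) (a b u v : R)
    (hab : a * b = 0) (huv : u * a + v * b = 1)
    (I : Ideal (MvPolynomial σ R))
    {K L : Type*} [Finite K] [Finite L]
    (ga : K → MvPolynomial σ R) (gb : L → MvPolynomial σ R)
    (hga0 : ∀ k, ga k ≠ 0) (hgb0 : ∀ l, gb l ≠ 0)
    (hGa : m.IsStrongGroebnerBasis (Set.range ga)
      (I + Ideal.span {(C a : MvPolynomial σ R)}))
    (hGb : m.IsStrongGroebnerBasis (Set.range gb)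
      (I + Ideal.span {(C b : MvPolynomial σ R)}))
    (hlca : ∀ k, (¬ ∃ c : R, ga k = C c) →
      m.lc (ga k) ∣ a ∧ m.lc (ga k) ∉ Ideal.span ({a} : Set R))
    (hlcb : ∀ l, (¬ ∃ c : R, gb l = C c) →
      m.lc (gb l) ∣ b ∧ m.lc (gb l) ∉ Ideal.span ({b} : Set R)) :
    m.IsStrongGroebnerBasis
      { f | ∃ k : K, ∃ l : L, f =
        monomial (m.lm (ga k) ⊔ m.lm (gb l) - m.lm (gb l)) (u * a * m.lc (ga k)) * gb l
        + monomial (m.lm (ga k) ⊔ m.lm (gb l) - m.lm (ga k)) (v * b * m.lc (gb l)) * ga k }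
      I :=
  strongGroebnerBasis_recombination_general m a b u v hab huv I ga gb hGa hGb
end

section
/- Let R be a principal ideal domain and let n ∈ R be nonzero. Then for every c ∈ R there exist u, d ∈ R such that u is coprime to n (equivalently, a greatest common divisor of u and n is a unit), d is a greatest common divisor of c and n (i.e., dR = cR + nR), and u·c ≡ d (mod n), i.e., n divides u·c − d. -/
/-- In a PID, if `a` is coprime to `b`, then for any nonzero `m` there is `k`
with `a + k * b` coprime to `m`. -/
theorem aux_coprime_shift {R : Type*} [CommRing R] [IsDomain R] [IsPrincipalIdealRing R]
    (a b : R) (hab : IsCoprime a b) (m : R) (hm : m ≠ 0) :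
    ∃ k : R, IsCoprime (a + k * b) m := by
  induction m using UniqueFactorizationMonoid.induction_on_prime with
  | h₁ => exact absurd rfl hm
  | h₂ x hx =>
    obtain ⟨v, rfl⟩ := hx
    exact ⟨0, 0, ↑v⁻¹, by simp⟩
  | h₃ d₀ p hd₀ hp ih =>
    obtain ⟨k₀, hk₀⟩ := ih hd₀
    by_cases hpd : p ∣ a + k₀ * b
    · refine ⟨k₀ + d₀, ?_⟩
      have heq : a + (k₀ + d₀) * b = (a + k₀ * b) + d₀ * b := by ring
      rw [heq]
      have h1 : IsCoprime ((a + k₀ * b) + d₀ * b) d₀ := by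
        have := hk₀.add_mul_right_left b
        rwa [mul_comm b d₀] at this
      have hpb : ¬ p ∣ (a + k₀ * b) + d₀ * b := by
        rintro hdvd
        have hpdb : p ∣ d₀ * b := (dvd_add_right hpd).mp hdvd
        rcases hp.dvd_mul.mp hpdb with h | h
        · exact hp.not_unit (hk₀.isUnit_of_dvd' hpd h)
        · have hpa : p ∣ a := (dvd_add_left (h.mul_left k₀)).mp hpd
          exact hp.not_unit (hab.isUnit_of_dvd' hpa h)
      exact ((hp.coprime_iff_not_dvd.2 hpb).symm.mul_right h1)
    · exact ⟨k₀, ((hp.coprime_iff_not_dvd.2 hpd).symm.mul_right hk₀)⟩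

/-- In a principal ideal domain `R` with `n ≠ 0`, for every `c ∈ R` there are `u, d ∈ R`
with `u` coprime to `n`, `d` a greatest common divisor of `c` and `n`
(i.e. `dR = cR + nR`), and `u·c ≡ d (mod n)`. -/
theorem exists_unit_mul_eq_gcd_mod {R : Type*} [CommRing R] [IsDomain R]
    [IsPrincipalIdealRing R] (n : R) (hn : n ≠ 0) (c : R) :
    ∃ u d : R, IsCoprime u n ∧
      Ideal.span ({d} : Set R) = Ideal.span ({c} : Set R) + Ideal.span ({n} : Set R) ∧
      n ∣ u * c - d := by
  -- let d generate the ideal (c, n)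
  set I : Ideal R := Ideal.span ({c} : Set R) + Ideal.span ({n} : Set R) with hI
  obtain ⟨d, hd⟩ := (IsPrincipalIdealRing.principal I).principal
  have hd' : I = Ideal.span ({d} : Set R) := by simpa [Ideal.submodule_span_eq] using hd
  have hIpair : I = Ideal.span ({c, n} : Set R) := by
    rw [hI, Ideal.span_insert]
    rfl
  -- d = a*c + b*n
  have hdmem : d ∈ Ideal.span ({c, n} : Set R) := by
    rw [← hIpair, hd']
    exact Ideal.mem_span_singleton_self d
  obtain ⟨a, b, hab⟩ := Ideal.mem_span_pair.mp hdmem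
  -- d ∣ c, d ∣ n
  have hdc : d ∣ c := by
    rw [← Ideal.mem_span_singleton, ← hd']
    exact Ideal.mem_sup_left (Ideal.mem_span_singleton_self c)
  have hdn : d ∣ n := by
    rw [← Ideal.mem_span_singleton, ← hd']
    exact Ideal.mem_sup_right (Ideal.mem_span_singleton_self n)
  obtain ⟨c', hc'⟩ := hdc
  obtain ⟨n', hn'⟩ := hdn
  have hd0 : d ≠ 0 := by rintro rfl; exact hn (by simpa using hn')
  -- a*c' + b*n' = 1
  have hkey : a * c' + b * n' = 1 := by
    have h2 : d * (a * c' + b * n') = d * 1 := by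
      calc d * (a * c' + b * n') = a * (d * c') + b * (d * n') := by ring
        _ = a * c + b * n := by rw [← hc', ← hn']
        _ = d := hab
        _ = d * 1 := (mul_one d).symm
    exact mul_left_cancel₀ hd0 h2
  have hcop : IsCoprime a n' := ⟨c', b, by linear_combination hkey⟩
  obtain ⟨k, hk⟩ := aux_coprime_shift a n' hcop n hn
  refine ⟨a + k * n', d, ?_, hd'.symm, ?_⟩
  · exact hk
  · refine ⟨k * c' - b, ?_⟩
    calc (a + k * n') * c - d
        = (a * c + b * n - d) + k * n' * c - b * n := by ring
      _ = k * n' * (d * c') - b * n := by rw [hab, hc']; ring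
      _ = n * (k * c' - b) := by rw [hn']; ring
end

section
/- Let R be a principal ideal domain and let n ∈ R be nonzero. Let a ∈ R be such that for a greatest common divisor d of a and n (i.e., dR = aR + nR) one has: d is not a unit and d ∉ nR. Then at least one of the following holds: (1) there exist m ∈ R and an integer k > 1 such that n is associated to m^k (n = m^k up to multiplication by a unit) and m divides a (equivalently, m is a greatest common divisor of a and m); or (2) there exist non-unit elements p, q ∈ R that are coprime (r·p + s·q = 1 for some r, s ∈ R) with n = p·q. -/
/-!
Pick a prime `p ∣ d` and write `n = p ^ k * c` with `p ∤ c`; then `k ≥ 1` since `p ∣ d ∣ n`.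
If `c` is a unit, `n` is associated to `p ^ k`, and `k = 1` would give `n ∣ p ∣ d`; otherwise
`p ^ k` and `c` are coprime non-units because `p` is prime and does not divide `c`.
-/

theorem WfDvdMonoid.exists_eq_pow_mul_not_dvd_of_dvd {R : Type*} [CommMonoidWithZero R]
    [WfDvdMonoid R] {p n : R} (hp : ¬ IsUnit p) (hn : n ≠ 0) (hpn : p ∣ n) :
    ∃ k : ℕ, ∃ c : R, 0 < k ∧ n = p ^ k * c ∧ ¬ p ∣ c := by
  obtain ⟨k, c, hpc, rfl⟩ := max_power_factor' hn hp
  refine ⟨k, c, Nat.pos_of_ne_zero ?_, rfl, hpc⟩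
  rintro rfl
  exact hpc (by simpa using hpn)

theorem dvd_left_and_right_of_span_eq_sup {R : Type*} [CommSemiring R] {d a n : R}
    (hd : Ideal.span {d} = Ideal.span {a} ⊔ Ideal.span {n}) : d ∣ a ∧ d ∣ n :=
  ⟨Ideal.span_singleton_le_span_singleton.mp (hd ▸ le_sup_left),
    Ideal.span_singleton_le_span_singleton.mp (hd ▸ le_sup_right)⟩

/-- Splitting a modulus in a PID: if `d` is a gcd of `a` and `n` (`dR = aR + nR`) with `d`
neither a unit nor in `nR`, then either `n` is (up to a unit) a proper power `m^k` with
`m ∣ a`, or `n = p·q` with `p, q` coprime non-units. -/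
theorem split_modulus_of_gcd_not_unit {R : Type*} [CommRing R] [IsDomain R]
    [IsPrincipalIdealRing R] (n : R) (hn : n ≠ 0) (a d : R)
    (hd : Ideal.span ({d} : Set R) = Ideal.span ({a} : Set R) + Ideal.span ({n} : Set R))
    (hd1 : ¬ IsUnit d) (hd2 : d ∉ Ideal.span ({n} : Set R)) :
    (∃ m : R, ∃ k : ℕ, 1 < k ∧ Associated n (m ^ k) ∧ m ∣ a) ∨
    (∃ p q : R, ¬ IsUnit p ∧ ¬ IsUnit q ∧ IsCoprime p q ∧ n = p * q) := by
  obtain ⟨hda, hdn⟩ := dvd_left_and_right_of_span_eq_sup hd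
  have hnd : ¬ n ∣ d := fun h => hd2 (Ideal.mem_span_singleton.mpr h)
  have hd0 : d ≠ 0 := by rintro rfl; exact hn (zero_dvd_iff.mp hdn)
  obtain ⟨p, hp, hpd⟩ := WfDvdMonoid.exists_irreducible_factor hd1 hd0
  replace hp := hp.prime
  obtain ⟨k, c, hk, rfl, hpc⟩ :=
    WfDvdMonoid.exists_eq_pow_mul_not_dvd_of_dvd hp.not_isUnit hn (hpd.trans hdn)
  by_cases hc : IsUnit c
  · have hnp : Associated (p ^ k * c) (p ^ k) := associated_mul_unit_left _ c hc
    refine .inl ⟨p, k, ?_, hnp, hpd.trans hda⟩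
    by_contra! hk1
    obtain rfl : k = 1 := by omega
    rw [pow_one] at hnp hnd
    exact hnd (hnp.dvd.trans hpd)
  · exact .inr ⟨p ^ k, c, (isUnit_pow_iff hk.ne').not.mpr hp.not_isUnit,
      hc, (hp.coprime_iff_not_dvd.mpr hpc).pow_left, rfl⟩
end

section
/- Let S be a commutative ring and let a, b, u, v ∈ S satisfy a·b = 0 and u·a + v·b = 1. Suppose x, y ∈ S are such that x divides a, y divides b, and y ∉ bS. Then x·y ≠ 0. -/
/-- If `a·b = 0` and `u·a + v·b = 1` in a commutative ring `S`, and `x ∣ a`, `y ∣ b` with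
`y ∉ bS`, then `x·y ≠ 0`. -/
theorem mul_ne_zero_of_dvd_of_not_mem {S : Type*} [CommRing S] (a b u v x y : S)
    (hab : a * b = 0) (huv : u * a + v * b = 1)
    (hx : x ∣ a) (hy : y ∣ b) (hyb : y ∉ Ideal.span ({b} : Set S)) :
    x * y ≠ 0 := by
  intro h
  obtain ⟨c, hc⟩ := hx
  apply hyb
  rw [Ideal.mem_span_singleton]
  refine ⟨v * y, ?_⟩
  have : y = (u * a + v * b) * y := by rw [huv, one_mul]
  calc y = (u * a + v * b) * y := this
    _ = u * c * (x * y) + b * (v * y) := by rw [hc]; ring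
    _ = b * (v * y) := by rw [h]; ring
end
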